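/- For 0 < α < π/2 and 0 < r ≤ cos α with ρ := √(1 - r²) and sin α ≤ r: (1 + sin²α - cos²α)/(1 + r) ≤ 2ρ sin α/(r cos α + ρ sin α + r). -/

import Mathlib

open Real

theorem mul_add_mul_le_one_of_sq_add_sq_eq_one {a b c d : ℝ} (hab : a ^ 2 + b ^ 2 = 1)
    (hcd : c ^ 2 + d ^ 2 = 1) : a * c + b * d ≤ 1 := by
  nlinarith [sq_nonneg (a - c), sq_nonneg (b - d)]

theorem two_mul_sq_div_one_add_le {s c r ρ : ℝ} (hs : 0 ≤ s) (hsρ : s ≤ ρ) (hr : 0 < r)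
    (hc : 0 ≤ c) (hcs : r * c + ρ * s ≤ 1) :
    2 * s ^ 2 / (1 + r) ≤ 2 * ρ * s / (r * c + ρ * s + r) := by
  have hden : 0 < r * c + ρ * s + r :=
    add_pos_of_nonneg_of_pos (add_nonneg (mul_nonneg hr.le hc) (mul_nonneg (hs.trans hsρ) hs)) hr
  rw [div_le_div_iff₀ (by linarith) hden]
  -- `s (r c + ρ s) ≤ s` and `s r ≤ ρ r`, so `s (r c + ρ s + r) ≤ ρ (1 + r)`.
  have key : s * (r * c + ρ * s + r) ≤ ρ * (1 + r) := by
    nlinarith [mul_le_mul_of_nonneg_left hcs hs, mul_le_mul_of_nonneg_right hsρ hr.le]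
  nlinarith [mul_le_mul_of_nonneg_left key hs]

theorem stmt9_general (α r ρ : ℝ) (hα0 : 0 < α) (hα1 : α < Real.pi / 2)
    (hr0 : 0 < r) (hrc : r ≤ Real.cos α)
    (hρ : ρ = Real.sqrt (1 - r ^ 2)) :
    (1 + Real.sin α ^ 2 - Real.cos α ^ 2) / (1 + r)
      ≤ 2 * ρ * Real.sin α / (r * Real.cos α + ρ * Real.sin α + r) := by
  have hpyth := sin_sq_add_cos_sq α
  have hs : 0 ≤ sin α := sin_nonneg_of_nonneg_of_le_pi hα0.le (by linarith [pi_pos])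
  have hc : 0 ≤ cos α := hr0.le.trans hrc
  have hr2 : r ^ 2 ≤ cos α ^ 2 := pow_le_pow_left₀ hr0.le hrc 2
  have hρsq : r ^ 2 + ρ ^ 2 = 1 := by
    rw [hρ, sq_sqrt (by nlinarith)]; ring
  have hsρ : sin α ≤ ρ := hρ ▸ le_sqrt_of_sq_le (by linarith)
  have hcs : r * cos α + ρ * sin α ≤ 1 :=
    mul_add_mul_le_one_of_sq_add_sq_eq_one hρsq (by linarith)
  rw [show 1 + sin α ^ 2 - cos α ^ 2 = 2 * sin α ^ 2 by linarith]
  exact two_mul_sq_div_one_add_le hs hsρ hr0 hc hcs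

theorem stmt9 (α r ρ : ℝ) (hα0 : 0 < α) (hα1 : α < Real.pi / 2)
    (hr0 : 0 < r) (hrc : r ≤ Real.cos α) (hsr : Real.sin α ≤ r)
    (hρ : ρ = Real.sqrt (1 - r ^ 2)) :
    (1 + Real.sin α ^ 2 - Real.cos α ^ 2) / (1 + r)
      ≤ 2 * ρ * Real.sin α / (r * Real.cos α + ρ * Real.sin α + r) :=
  stmt9_general α r ρ hα0 hα1 hr0 hrc hρ
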